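/- Let Ω be a separable metric space, {p_n} a p-chaotic sequence of symmetric probability measures on Ω^n, and D : Ω → (density operators on H) a continuous function. Define D̄ = ∫ D(ω) p(dω) and D_n = ∫ D(ω_1) ⊗ ⋯ ⊗ D(ω_n) p_n(dω). Then for each fixed k, the partial traces Tr^{(n−k)} D_n converge to D̄^{⊗k} in the weak-* topology on trace-class operators (i.e., Tr(Tr^{(n−k)}(D_n) B) → Tr(D̄^{⊗k} B) for every bounded operator B on H^{⊗k}). -/

import Mathlib

open Filter
open scoped BigOperators ComplexOrder

namespace QC

variable {α : Type*} [Fintype α] [DecidableEq α]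

/-- The trace norm (Schatten 1-norm) of a matrix: the trace of `√(AᴴA)`. -/
noncomputable def traceNorm (A : Matrix α α ℂ) : ℝ :=
  (((Matrix.posSemidef_conjTranspose_mul_self A).1.eigenvectorUnitary : Matrix α α ℂ) *
    Matrix.diagonal (((↑) : ℝ → ℂ) ∘ (Real.sqrt ·) ∘ (Matrix.posSemidef_conjTranspose_mul_self A).1.eigenvalues) *
    (star (Matrix.posSemidef_conjTranspose_mul_self A).1.eigenvectorUnitary : Matrix α α ℂ)).trace.re

/-- A density operator: a positive semidefinite matrix of trace one. -/
def IsDensity (A : Matrix α α ℂ) : Prop := A.PosSemidef ∧ A.trace = 1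

variable {ι : Type*} [Fintype ι] [DecidableEq ι]

/-- Tensor product of `n` operators on `H`, as an operator on `H^{⊗n}`
(with `H = ℂ^ι`, and `H^{⊗n}` identified with `ℂ^(Fin n → ι)`). -/
def tprod {n : ℕ} (A : Fin n → Matrix ι ι ℂ) : Matrix (Fin n → ι) (Fin n → ι) ℂ :=
  Matrix.of fun x y => ∏ i, A i (x i) (y i)

/-- `k`-fold tensor power of an operator. -/
def tpow (A : Matrix ι ι ℂ) (k : ℕ) : Matrix (Fin k → ι) (Fin k → ι) ℂ :=
  tprod (fun _ => A)

/-- Extend a multi-index on the first `k` coordinates by one on the last `n - k`. -/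
def extend {k n : ℕ} (h : k ≤ n) (x : Fin k → ι) (z : Fin (n - k) → ι) : Fin n → ι :=
  fun i => if h' : (i : ℕ) < k then x ⟨i, h'⟩ else z ⟨(i : ℕ) - k, by
    have := i.isLt; omega⟩

/-- Partial trace over the last `n - k` tensor factors. -/
noncomputable def ptrace {k n : ℕ} (h : k ≤ n) (M : Matrix (Fin n → ι) (Fin n → ι) ℂ) :
    Matrix (Fin k → ι) (Fin k → ι) ℂ :=
  Matrix.of fun x y => ∑ z : Fin (n - k) → ι, M (extend h x z) (extend h y z)

/-- The permutation unitary `U_π` on `H^{⊗n}`, `U_π (x₁ ⊗ ⋯ ⊗ xₙ) = x_{π(1)} ⊗ ⋯ ⊗ x_{π(n)}`. -/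
def Umat {n : ℕ} (π : Equiv.Perm (Fin n)) : Matrix (Fin n → ι) (Fin n → ι) ℂ :=
  Matrix.of fun x y => if x = y ∘ π then 1 else 0

/-- `{D n}` is `E`-chaotic in the quantum sense: for each fixed `k` the `k`-marginals
(partial traces) converge in trace norm to `E^{⊗k}`. -/
def QChaotic (D : ∀ n, Matrix (Fin n → ι) (Fin n → ι) ℂ) (E : Matrix ι ι ℂ) : Prop :=
  ∀ k : ℕ, Tendsto
    (fun n => traceNorm (ptrace (Nat.le_add_right k n) (D (k + n)) - tpow E k))
    atTop (nhds 0)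

open MeasureTheory

variable {Ω : Type*} [MeasurableSpace Ω]

/-- The `k`-marginal of a measure on `Ω^n`. -/
noncomputable def marginal {k n : ℕ} (h : k ≤ n) (μ : Measure (Fin n → Ω)) :
    Measure (Fin k → Ω) :=
  μ.map (fun x => x ∘ Fin.castLE h)

/-- A measure on `Ω^n` is symmetric if invariant under permutations of coordinates. -/
def IsSymm {n : ℕ} (μ : Measure (Fin n → Ω)) : Prop :=
  ∀ π : Equiv.Perm (Fin n), μ.map (fun x => x ∘ π) = μ

/-- `{p_n}` is `μ`-chaotic: `k`-marginals converge weakly to `μ^{⊗k}`. -/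
def IsChaotic [TopologicalSpace Ω] (p : ∀ n, Measure (Fin n → Ω)) (μ : Measure Ω) : Prop :=
  ∀ (k : ℕ) (f : BoundedContinuousFunction (Fin k → Ω) ℝ),
    Tendsto (fun n => ∫ x, f x ∂ marginal (Nat.le_add_right k n) (p (k + n)))
      atTop (nhds (∫ x, f x ∂ (Measure.pi fun _ : Fin k => μ)))

/-- The Bochner integral `∫ D(ω₁) ⊗ ⋯ ⊗ Dₙ(ωₙ) p(dω)` (computed entrywise). -/
noncomputable def encode {n : ℕ} (Dfun : Ω → Matrix ι ι ℂ) (p : Measure (Fin n → Ω)) :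
    Matrix (Fin n → ι) (Fin n → ι) ℂ :=
  Matrix.of fun x y => ∫ ω, ∏ i, Dfun (ω i) (x i) (y i) ∂ p

/-- The mean density operator `D̄ = ∫ D(ω) p(dω)` (computed entrywise). -/
noncomputable def meanDensity (Dfun : Ω → Matrix ι ι ℂ) (μ : Measure Ω) :
    Matrix ι ι ℂ :=
  Matrix.of fun a b => ∫ ω, Dfun ω a b ∂ μ

/-!
Each entry of `D(ω₁) ⊗ ⋯ ⊗ D(ωₙ)` is a product of entries of the `D(ωᵢ)`, and since every
`D(ω)` has trace one, tracing out the last `n - k` factors leaves `D(ω₁) ⊗ ⋯ ⊗ D(ωₖ)`.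
Integrating, `Tr^{(n-k)} Dₙ` is the encoding of the `k`-marginal of `pₙ`. Entries of density
matrices have modulus at most one, so every entry of that encoding is the integral of a bounded
continuous function against the marginal; chaoticity makes it converge to the integral against
`μ^{⊗k}`, which by Fubini is the corresponding entry of `D̄^{⊗k}`. On the finite-dimensional
`H^{⊗k}`, `M ↦ Tr(M B)` is continuous, so entrywise convergence is enough.
-/

open scoped Topology

section Density

variable {n : Type*} [Fintype n]

open scoped MatrixOrder in
theorem _root_.Matrix.PosSemidef.norm_apply_le {A : Matrix n n ℂ} (hA : A.PosSemidef) (a b : n) :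
    ‖A a b‖ ≤ ((A a a).re + (A b b).re) / 2 := by
  classical
  obtain ⟨B, rfl⟩ := CStarAlgebra.nonneg_iff_eq_star_mul_self.mp hA.nonneg
  have hdiag : ∀ c, ((star B * B) c c).re = ∑ d, ‖B d c‖ ^ 2 := fun c => by
    simp [Matrix.mul_apply, Complex.re_sum, ← Complex.normSq_eq_norm_sq, Complex.normSq_apply]
  calc ‖(star B * B) a b‖ ≤ ∑ d, ‖B d a‖ * ‖B d b‖ := by
        rw [Matrix.mul_apply]
        refine (norm_sum_le _ _).trans_eq (Finset.sum_congr rfl fun d _ => ?_)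
        rw [norm_mul, Matrix.star_apply, norm_star]
    _ ≤ ∑ d, (‖B d a‖ ^ 2 + ‖B d b‖ ^ 2) / 2 :=
        Finset.sum_le_sum fun d _ => by linarith [two_mul_le_add_sq ‖B d a‖ ‖B d b‖]
    _ = _ := by rw [hdiag, hdiag, ← Finset.sum_div, Finset.sum_add_distrib]

theorem IsDensity.re_apply_self_le_one {A : Matrix n n ℂ} (hA : IsDensity A) (a : n) :
    (A a a).re ≤ 1 := by
  have htr : ∑ c, (A c c).re = 1 := by
    simpa [Matrix.trace, Complex.re_sum] using congrArg Complex.re hA.2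
  exact htr ▸ Finset.single_le_sum (f := fun c => (A c c).re)
    (fun c _ => (Complex.nonneg_iff.mp (hA.1.diag_nonneg)).1) (Finset.mem_univ a)

theorem IsDensity.norm_apply_le_one {A : Matrix n n ℂ} (hA : IsDensity A) (a b : n) :
    ‖A a b‖ ≤ 1 := by
  linarith [hA.1.norm_apply_le a b, hA.re_apply_self_le_one a, hA.re_apply_self_le_one b]

end Density

theorem _root_.Fin.prod_univ_castLE_mul_natAdd {M : Type*} [CommMonoid M] {k n : ℕ} (h : k ≤ n)
    (f : Fin n → M) :
    ∏ i, f i = (∏ i : Fin k, f (Fin.castLE h i)) *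
      ∏ j : Fin (n - k), f (Fin.cast (Nat.add_sub_of_le h) (Fin.natAdd k j)) := by
  rw [← (finCongr (Nat.add_sub_of_le h)).prod_comp, Fin.prod_univ_add]
  rfl

instance {k n : ℕ} (h : k ≤ n) (p : Measure (Fin n → Ω)) [IsFiniteMeasure p] :
    IsFiniteMeasure (marginal h p) := by
  unfold marginal
  infer_instance

section Tensor

omit [Fintype ι] [DecidableEq ι]

@[simp]
theorem extend_castLE {k n : ℕ} (h : k ≤ n) (x : Fin k → ι) (z : Fin (n - k) → ι)
    (i : Fin k) : extend h x z (Fin.castLE h i) = x i := by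
  simp [extend]

@[simp]
theorem extend_natAdd {k n : ℕ} (h : k ≤ n) (x : Fin k → ι) (z : Fin (n - k) → ι)
    (j : Fin (n - k)) : extend h x z (Fin.cast (Nat.add_sub_of_le h) (Fin.natAdd k j)) = z j := by
  simp [extend]

theorem norm_tprod_apply_le_one {m : ℕ} {A : Fin m → Matrix ι ι ℂ}
    (hA : ∀ i a b, ‖A i a b‖ ≤ 1) (x y : Fin m → ι) : ‖tprod A x y‖ ≤ 1 := by
  rw [tprod, Matrix.of_apply, norm_prod]
  exact Finset.prod_le_one (fun i _ => norm_nonneg _) fun i _ => hA i _ _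

omit [MeasurableSpace Ω] in
theorem continuous_tprod_apply [TopologicalSpace Ω] {m : ℕ} {Dfun : Ω → Matrix ι ι ℂ}
    (hcont : Continuous Dfun) (x y : Fin m → ι) :
    Continuous fun ω : Fin m → Ω => tprod (fun i => Dfun (ω i)) x y := by
  simp only [tprod, Matrix.of_apply]
  exact continuous_finsetProd _ fun i _ => (hcont.comp (continuous_apply i)).matrix_elem _ _

theorem encode_pi (Dfun : Ω → Matrix ι ι ℂ) (μ : Measure Ω) [SigmaFinite μ] (k : ℕ) :
    encode Dfun (Measure.pi fun _ : Fin k => μ) = tpow (meanDensity Dfun μ) k :=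
  Matrix.ext fun x y => integral_fintype_prod_eq_prod fun i ω => Dfun ω (x i) (y i)

end Tensor

section PartialTrace

omit [DecidableEq ι]

theorem ptrace_tprod {k n : ℕ} (h : k ≤ n) (A : Fin n → Matrix ι ι ℂ)
    (hA : ∀ i, (A i).trace = 1) : ptrace h (tprod A) = tprod fun i => A (Fin.castLE h i) := by
  have hdiag (i : Fin n) : ∑ a, A i a a = 1 := hA i
  refine Matrix.ext fun x y => ?_
  change ∑ z, ∏ i, A i (extend h x z i) (extend h y z i) = ∏ i, A (Fin.castLE h i) (x i) (y i)
  conv_lhs => arg 2; ext z; rw [Fin.prod_univ_castLE_mul_natAdd h]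
  simp only [extend_castLE, extend_natAdd]
  rw [← Finset.mul_sum, ← Fintype.prod_sum fun j a => A (Fin.cast _ (Fin.natAdd k j)) a a]
  simp only [hdiag, Finset.prod_const_one, mul_one]

open scoped BoundedContinuousFunction

variable [TopologicalSpace Ω] [SecondCountableTopology Ω] [OpensMeasurableSpace Ω]

theorem integrable_tprod_apply {m : ℕ} {Dfun : Ω → Matrix ι ι ℂ} (hcont : Continuous Dfun)
    (hdens : ∀ ω, IsDensity (Dfun ω)) (ν : Measure (Fin m → Ω)) [IsFiniteMeasure ν]
    (x y : Fin m → ι) : Integrable (fun ω => tprod (fun i => Dfun (ω i)) x y) ν :=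
  .of_bound (continuous_tprod_apply hcont x y).aestronglyMeasurable 1 <| .of_forall fun ω =>
    norm_tprod_apply_le_one (fun i => (hdens (ω i)).norm_apply_le_one) x y

theorem ptrace_encode {k n : ℕ} (h : k ≤ n) {Dfun : Ω → Matrix ι ι ℂ}
    (hcont : Continuous Dfun) (hdens : ∀ ω, IsDensity (Dfun ω)) (p : Measure (Fin n → Ω)) [IsFiniteMeasure p] :
    ptrace h (encode Dfun p) = encode Dfun (marginal h p) := by
  refine Matrix.ext fun x y => ?_
  have hmeas : Measurable fun ω : Fin n → Ω => ω ∘ Fin.castLE h :=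
    measurable_pi_lambda _ fun i => measurable_pi_apply _
  calc ptrace h (encode Dfun p) x y = ∫ ω, ptrace h (tprod fun i => Dfun (ω i)) x y ∂p :=
        (integral_finsetSum _ fun z _ => integrable_tprod_apply hcont hdens p _ _).symm
    _ = ∫ ω, tprod (fun i => Dfun (ω (Fin.castLE h i))) x y ∂p := by
        simp_rw [ptrace_tprod h _ fun i => (hdens _).2]
    _ = encode Dfun (marginal h p) x y :=
        (integral_map hmeas.aemeasurable
          (continuous_tprod_apply hcont x y).aestronglyMeasurable).symm

theorem IsChaotic.tendsto_integral {p : ∀ n, Measure (Fin n → Ω)} {μ : Measure Ω}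
    [∀ n, IsFiniteMeasure (p n)] [IsFiniteMeasure μ] (hchaos : IsChaotic p μ) (k : ℕ)
    (f : (Fin k → Ω) →ᵇ ℂ) :
    Tendsto (fun n => ∫ ω, f ω ∂marginal (Nat.le_add_right k n) (p (k + n))) atTop
      (𝓝 (∫ ω, f ω ∂Measure.pi fun _ : Fin k => μ)) := by
  let ν n : FiniteMeasure (Fin k → Ω) :=
    ⟨marginal (Nat.le_add_right k n) (p (k + n)), inferInstance⟩
  let ν₀ : FiniteMeasure (Fin k → Ω) := ⟨Measure.pi fun _ : Fin k => μ, inferInstance⟩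
  have hν : Tendsto ν atTop (𝓝 ν₀) :=
    FiniteMeasure.tendsto_iff_forall_integral_tendsto.2 (hchaos k)
  exact (FiniteMeasure.tendsto_iff_forall_integral_rclike_tendsto ℂ).1 hν f

theorem IsChaotic.tendsto_encode {p : ∀ n, Measure (Fin n → Ω)} {μ : Measure Ω}
    [∀ n, IsFiniteMeasure (p n)] [IsFiniteMeasure μ] (hchaos : IsChaotic p μ)
    {Dfun : Ω → Matrix ι ι ℂ} (hcont : Continuous Dfun) (hdens : ∀ ω, IsDensity (Dfun ω))
    (k : ℕ) :
    Tendsto (fun n => encode Dfun (marginal (Nat.le_add_right k n) (p (k + n)))) atTop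
      (𝓝 (encode Dfun (Measure.pi fun _ : Fin k => μ))) :=
  tendsto_pi_nhds.2 fun x => tendsto_pi_nhds.2 fun y =>
    hchaos.tendsto_integral k <| .ofNormedAddCommGroup _ (continuous_tprod_apply hcont x y) 1
      fun ω => norm_tprod_apply_le_one (fun i => (hdens (ω i)).norm_apply_le_one) x y

end PartialTrace

theorem encode_weakStar_convergence_general {Ω : Type*} [MetricSpace Ω]
    [TopologicalSpace.SeparableSpace Ω] [MeasurableSpace Ω] [BorelSpace Ω]
    (Dfun : Ω → Matrix ι ι ℂ) (hcont : Continuous Dfun)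
    (hdens : ∀ ω, IsDensity (Dfun ω))
    (p : ∀ n, Measure (Fin n → Ω)) (hp : ∀ n, IsProbabilityMeasure (p n))
    (μ : Measure Ω) (hμ : IsProbabilityMeasure μ) (hchaos : IsChaotic p μ) :
    ∀ (k : ℕ) (B : Matrix (Fin k → ι) (Fin k → ι) ℂ),
      Tendsto
        (fun n => (ptrace (Nat.le_add_right k n) (encode Dfun (p (k + n))) * B).trace)
        atTop (nhds ((tpow (meanDensity Dfun μ) k * B).trace)) := by
  intro k B
  have : SecondCountableTopology Ω := UniformSpace.secondCountable_of_separable Ω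
  simp only [ptrace_encode _ hcont hdens, ← encode_pi]
  exact ((continuous_id.matrix_mul continuous_const).matrix_trace.tendsto _).comp
    (hchaos.tendsto_encode hcont hdens k)

/-- **Encoding classical chaos as quantum states: weak-* convergence of marginals.**
Let `Ω` be a separable metric space, `{p_n}` a `μ`-chaotic sequence of symmetric
probability measures on `Ω^n`, and `D : Ω → densities` continuous. With
`D̄ = ∫ D(ω) μ(dω)` and `D_n = ∫ D(ω₁) ⊗ ⋯ ⊗ D(ωₙ) p_n(dω)`, for each fixed `k` the
partial traces `Tr^{(n−k)} D_n` converge to `D̄^{⊗k}` in the weak-* topology, i.e.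
`Tr(Tr^{(n−k)}(D_n) B) → Tr(D̄^{⊗k} B)` for every bounded operator `B` on `H^{⊗k}`. -/
theorem encode_weakStar_convergence {Ω : Type*} [MetricSpace Ω]
    [TopologicalSpace.SeparableSpace Ω] [MeasurableSpace Ω] [BorelSpace Ω]
    (Dfun : Ω → Matrix ι ι ℂ) (hcont : Continuous Dfun)
    (hdens : ∀ ω, IsDensity (Dfun ω))
    (p : ∀ n, Measure (Fin n → Ω)) (hp : ∀ n, IsProbabilityMeasure (p n))
    (hsym : ∀ n, IsSymm (p n))
    (μ : Measure Ω) (hμ : IsProbabilityMeasure μ) (hchaos : IsChaotic p μ) :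
    ∀ (k : ℕ) (B : Matrix (Fin k → ι) (Fin k → ι) ℂ),
      Tendsto
        (fun n => (ptrace (Nat.le_add_right k n) (encode Dfun (p (k + n))) * B).trace)
        atTop (nhds ((tpow (meanDensity Dfun μ) k * B).trace)) :=
  encode_weakStar_convergence_general Dfun hcont hdens p hp μ hμ hchaos

end QC
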